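/- Let C = {y ∈ ℝ^n : y_0² > y_1² + ⋯ + y_{n−1}²} and define g : C → ℝ by g(y) = sign(y_0)·√(y_0² − (y_1² + ⋯ + y_{n−1}²)). Then the range of φ equals the closure in ℝ^n × ℝ^n of the graph of the gradient of g over C, i.e. Set.range φ = closure {(y, ∇g(y)) : y ∈ C}. -/

import Mathlib

noncomputable section

open scoped RealInnerProductSpace

/-- `ℝ^{n-1}` with the Euclidean norm. -/
abbrev EucV (n : ℕ) : Type := EuclideanSpace ℝ (Fin (n - 1))

/-- The domain `ℝ × D^{n-1}`, where `D^{n-1}` is the open unit disk. -/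
def diskDom (n : ℕ) : Set (ℝ × EucV n) := {p | ‖p.2‖ < 1}

/-- The map `φ : ℝ × D^{n-1} → T^*ℝ^n = ℝ^n × ℝ^n`, with `ℝ^n = ℝ × ℝ^{n-1}`:
base components `(x_0, x_0·x)` and fiber components `(1, -x)/√(1 - ‖x‖²)`. -/
def phiMap (n : ℕ) : ℝ × EucV n → (ℝ × EucV n) × (ℝ × EucV n) := fun p =>
  ((p.1, p.1 • p.2),
    ((Real.sqrt (1 - ‖p.2‖ ^ 2))⁻¹, -((Real.sqrt (1 - ‖p.2‖ ^ 2))⁻¹) • p.2))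

/-- `f(x_0, x) = x_0·√(1 - ‖x‖²)`. -/
def fPrim (n : ℕ) : ℝ × EucV n → ℝ := fun p => p.1 * Real.sqrt (1 - ‖p.2‖ ^ 2)

/-- The base component `φ_b(x_0, x) = (x_0, x_0·x)`. -/
def phiBase (n : ℕ) : ℝ × EucV n → ℝ × EucV n := fun p => (p.1, p.1 • p.2)

/-- The fiber component `ξ(x_0, x) = (1, -x)/√(1 - ‖x‖²)`. -/
def xiMap (n : ℕ) : ℝ × EucV n → ℝ × EucV n := fun p =>
  ((Real.sqrt (1 - ‖p.2‖ ^ 2))⁻¹, -((Real.sqrt (1 - ‖p.2‖ ^ 2))⁻¹) • p.2)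

/-- The standard inner product on `ℝ^n = ℝ × ℝ^{n-1}`. -/
def innerRn (n : ℕ) (a b : ℝ × EucV n) : ℝ := a.1 * b.1 + ⟪a.2, b.2⟫

/-- The open cone `C = {y : y_0² > y_1² + ⋯ + y_{n-1}²}`. -/
def coneC (n : ℕ) : Set (ℝ × EucV n) := {y | ‖y.2‖ ^ 2 < y.1 ^ 2}

/-- `g(y) = sign(y_0)·√(y_0² − (y_1² + ⋯ + y_{n-1}²))`. -/
def gFun (n : ℕ) : ℝ × EucV n → ℝ := fun y => Real.sign y.1 * Real.sqrt (y.1 ^ 2 - ‖y.2‖ ^ 2)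

/-! ### Auxiliary material -/

/-- The candidate Fréchet derivative of `y ↦ √(y₀² - ‖y₂‖²)`. -/
def Dclm (n : ℕ) (y : ℝ × EucV n) : (ℝ × EucV n) →L[ℝ] ℝ :=
  (1 / (2 * Real.sqrt (y.1 ^ 2 - ‖y.2‖ ^ 2))) •
      (y.1 • ContinuousLinearMap.fst ℝ ℝ (EucV n) + y.1 • ContinuousLinearMap.fst ℝ ℝ (EucV n) -
        (fderivInnerCLM ℝ (y.2, y.2)).comp
          ((ContinuousLinearMap.snd ℝ ℝ (EucV n)).prod (ContinuousLinearMap.snd ℝ ℝ (EucV n))))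

lemma Dclm_apply (n : ℕ) (y : ℝ × EucV n) (hy : 0 < y.1 ^ 2 - ‖y.2‖ ^ 2) (v : ℝ × EucV n) :
    Dclm n y v = (y.1 * v.1 - ⟪y.2, v.2⟫) / Real.sqrt (y.1 ^ 2 - ‖y.2‖ ^ 2) := by
  have hs : Real.sqrt (y.1 ^ 2 - ‖y.2‖ ^ 2) ≠ 0 := by positivity
  simp only [Dclm, ContinuousLinearMap.smul_apply, ContinuousLinearMap.sub_apply,
    ContinuousLinearMap.add_apply, ContinuousLinearMap.coe_comp', Function.comp_apply,
    ContinuousLinearMap.prod_apply, ContinuousLinearMap.coe_fst', ContinuousLinearMap.coe_snd',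
    fderivInnerCLM_apply, smul_eq_mul]
  rw [real_inner_comm v.2 y.2]
  field_simp
  ring

lemma hasF_sqrtQuad (n : ℕ) (y : ℝ × EucV n) (hy : 0 < y.1 ^ 2 - ‖y.2‖ ^ 2) :
    HasFDerivAt (fun y : ℝ × EucV n => Real.sqrt (y.1 ^ 2 - ‖y.2‖ ^ 2)) (Dclm n y) y := by
  have h1 := (hasFDerivAt_fst (𝕜 := ℝ) (p := y)).mul (hasFDerivAt_fst (𝕜 := ℝ) (p := y))
  have h2 := (hasFDerivAt_snd (𝕜 := ℝ) (p := y)).inner ℝ (hasFDerivAt_snd (𝕜 := ℝ) (p := y))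
  have h3' : HasFDerivAt (fun y : ℝ × EucV n => y.1 ^ 2 - ‖y.2‖ ^ 2)
      (y.1 • ContinuousLinearMap.fst ℝ ℝ (EucV n) + y.1 • ContinuousLinearMap.fst ℝ ℝ (EucV n)
        - (fderivInnerCLM ℝ (y.2, y.2)).comp
            ((ContinuousLinearMap.snd ℝ ℝ (EucV n)).prod
              (ContinuousLinearMap.snd ℝ ℝ (EucV n)))) y := by
    simpa only [real_inner_self_eq_norm_sq, sq, Pi.sub_def, Pi.mul_def] using h1.sub h2
  exact (Real.hasDerivAt_sqrt (ne_of_gt hy)).comp_hasFDerivAt y h3'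

lemma hasF_gFun (n : ℕ) (y : ℝ × EucV n) (hy : y ∈ coneC n) :
    HasFDerivAt (gFun n) (Real.sign y.1 • Dclm n y) y := by
  have hy' : 0 < y.1 ^ 2 - ‖y.2‖ ^ 2 := by simpa [sub_pos, coneC] using hy
  have hy1 : y.1 ≠ 0 := by
    rintro h; rw [h] at hy'; simp at hy'; nlinarith [sq_nonneg ‖y.2‖, norm_nonneg y.2, hy']
  rcases hy1.lt_or_gt with hneg | hpos
  · have hev : gFun n =ᶠ[nhds y] fun z => -Real.sqrt (z.1 ^ 2 - ‖z.2‖ ^ 2) := by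
      filter_upwards [(isOpen_lt continuous_fst continuous_const).mem_nhds
        (show y ∈ {z : ℝ × EucV n | z.1 < 0} from hneg)] with z hz
      simp [gFun, Real.sign_of_neg hz]
    rw [Real.sign_of_neg hneg]
    have := ((hasF_sqrtQuad n y hy').neg).congr_of_eventuallyEq hev
    rw [show (-1 : ℝ) • Dclm n y = -Dclm n y by module]
    exact this
  · have hev : gFun n =ᶠ[nhds y] fun z => Real.sqrt (z.1 ^ 2 - ‖z.2‖ ^ 2) := by
      filter_upwards [(isOpen_lt continuous_const continuous_fst).mem_nhds
        (show y ∈ {z : ℝ × EucV n | 0 < z.1} from hpos)] with z hz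
      simp [gFun, Real.sign_of_pos hz]
    rw [Real.sign_of_pos hpos]
    have := (hasF_sqrtQuad n y hy').congr_of_eventuallyEq hev
    simpa using this

lemma fderiv_gFun_apply (n : ℕ) (y : ℝ × EucV n) (hy : y ∈ coneC n) (v : ℝ × EucV n) :
    fderiv ℝ (gFun n) y v
      = Real.sign y.1 * ((y.1 * v.1 - ⟪y.2, v.2⟫) / Real.sqrt (y.1 ^ 2 - ‖y.2‖ ^ 2)) := by
  have hy' : 0 < y.1 ^ 2 - ‖y.2‖ ^ 2 := by simpa [sub_pos, coneC] using hy
  rw [(hasF_gFun n y hy).fderiv]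
  simp [Dclm_apply n y hy']

/-- The gradient of `g`. -/
def gradVec (n : ℕ) (y : ℝ × EucV n) : ℝ × EucV n :=
  (Real.sign y.1 * y.1 / Real.sqrt (y.1 ^ 2 - ‖y.2‖ ^ 2),
    -(Real.sign y.1 / Real.sqrt (y.1 ^ 2 - ‖y.2‖ ^ 2)) • y.2)

lemma fderiv_eq_inner_gradVec (n : ℕ) (y : ℝ × EucV n) (hy : y ∈ coneC n) (v : ℝ × EucV n) :
    fderiv ℝ (gFun n) y v = innerRn n (gradVec n y) v := by
  rw [fderiv_gFun_apply n y hy v]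
  simp only [innerRn, gradVec, inner_neg_left, real_inner_smul_left]
  ring

lemma innerRn_cancel (n : ℕ) (a b : ℝ × EucV n) (h : ∀ v, innerRn n a v = innerRn n b v) :
    a = b := by
  have h1 := h (1, 0)
  simp [innerRn] at h1
  have h2 : a.2 = b.2 := by
    apply ext_inner_right ℝ
    intro w
    have := h (0, w)
    simpa [innerRn] using this
  exact Prod.ext h1 h2

lemma phi_key (n : ℕ) (t : ℝ) (x : EucV n) (ht : t ≠ 0) (hx : ‖x‖ < 1) :
    (t, t • x) ∈ coneC n ∧
      gradVec n (t, t • x)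
        = ((Real.sqrt (1 - ‖x‖ ^ 2))⁻¹, -((Real.sqrt (1 - ‖x‖ ^ 2))⁻¹) • x) := by
  have hx2 : ‖x‖ ^ 2 < 1 := by nlinarith [norm_nonneg x]
  have ht2 : 0 < t ^ 2 := by positivity
  have hcone : (t, t • x) ∈ coneC n := by
    simp only [coneC, Set.mem_setOf_eq, norm_smul, Real.norm_eq_abs, mul_pow, sq_abs]
    nlinarith
  refine ⟨hcone, ?_⟩
  have hst : Real.sqrt (t ^ 2 - ‖t • x‖ ^ 2) = |t| * Real.sqrt (1 - ‖x‖ ^ 2) := by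
    rw [show t ^ 2 - ‖t • x‖ ^ 2 = t ^ 2 * (1 - ‖x‖ ^ 2) by
      simp [norm_smul, mul_pow, sq_abs]; ring]
    rw [Real.sqrt_mul (le_of_lt ht2), Real.sqrt_sq_eq_abs]
  have hs : 0 < Real.sqrt (1 - ‖x‖ ^ 2) := Real.sqrt_pos.2 (by linarith)
  have habs : Real.sign t * t = |t| := by
    rcases ht.lt_or_gt with h | h
    · rw [Real.sign_of_neg h, abs_of_neg h]; ring
    · rw [Real.sign_of_pos h, abs_of_pos h]; ring
  have habs' : |t| ≠ 0 := abs_ne_zero.2 ht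
  refine Prod.ext ?_ ?_
  · show Real.sign t * t / Real.sqrt (t ^ 2 - ‖(t, t • x).2‖ ^ 2) = _
    rw [show ((t, t • x) : ℝ × EucV n).2 = t • x from rfl, hst, habs]
    field_simp
  · show -(Real.sign t / Real.sqrt (t ^ 2 - ‖(t, t • x).2‖ ^ 2)) • (t • x) = _
    rw [show ((t, t • x) : ℝ × EucV n).2 = t • x from rfl, hst]
    rw [smul_smul]
    congr 1
    field_simp
    rcases ht.lt_or_gt with h | h
    · rw [Real.sign_of_neg h, abs_of_neg h]; ring
    · rw [Real.sign_of_pos h, abs_of_pos h]; ring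

lemma cone_norm_lt (n : ℕ) (y : ℝ × EucV n) (hy : y ∈ coneC n) :
    y.1 ≠ 0 ∧ ‖y.1⁻¹ • y.2‖ < 1 ∧ y.1 • (y.1⁻¹ • y.2) = y.2 := by
  have h : ‖y.2‖ ^ 2 < y.1 ^ 2 := hy
  have h1 : y.1 ≠ 0 := by
    intro h0; rw [h0] at h; simp at h; nlinarith [norm_nonneg y.2, sq_nonneg ‖y.2‖]
  have hlt : ‖y.2‖ < |y.1| := by
    nlinarith [norm_nonneg y.2, abs_nonneg y.1, sq_abs y.1]
  refine ⟨h1, ?_, ?_⟩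
  · rw [norm_smul, Real.norm_eq_abs, abs_inv]
    rw [inv_mul_lt_iff₀ (abs_pos.2 h1)]
    simpa using hlt
  · rw [smul_smul, mul_inv_cancel₀ h1, one_smul]

/-- The closed set characterizing the image of `φ`. -/
def Kset (n : ℕ) : Set ((ℝ × EucV n) × (ℝ × EucV n)) :=
  {p | 1 ≤ p.2.1 ∧ p.2.1 ^ 2 = 1 + ‖p.2.2‖ ^ 2 ∧ p.2.1 • p.1.2 + p.1.1 • p.2.2 = 0}

lemma Kset_closed (n : ℕ) : IsClosed (Kset n) := by
  have : Kset n = {p : (ℝ × EucV n) × (ℝ × EucV n) | 1 ≤ p.2.1} ∩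
      ({p : (ℝ × EucV n) × (ℝ × EucV n) | p.2.1 ^ 2 = 1 + ‖p.2.2‖ ^ 2} ∩
       {p : (ℝ × EucV n) × (ℝ × EucV n) | p.2.1 • p.1.2 + p.1.1 • p.2.2 = 0}) := by
    ext p; simp [Kset, and_assoc]
  rw [this]
  refine (isClosed_le continuous_const (by fun_prop)).inter
    ((isClosed_eq (by fun_prop) (by fun_prop)).inter (isClosed_eq (by fun_prop) continuous_const))

lemma image_eq_K (n : ℕ) : phiMap n '' diskDom n = Kset n := by
  ext p
  constructor
  · rintro ⟨⟨t, x⟩, hx, rfl⟩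
    have hx' : ‖x‖ < 1 := hx
    have hx2 : ‖x‖ ^ 2 < 1 := by nlinarith [norm_nonneg x]
    have h1 : (0:ℝ) < 1 - ‖x‖ ^ 2 := by linarith
    set s := Real.sqrt (1 - ‖x‖ ^ 2) with hs_def
    have hs : 0 < s := Real.sqrt_pos.2 h1
    have hs2 : s ^ 2 = 1 - ‖x‖ ^ 2 := Real.sq_sqrt h1.le
    have hs1 : s ≤ 1 := by
      rw [hs_def]
      exact Real.sqrt_le_one.2 (by nlinarith [norm_nonneg x])
    refine ⟨?_, ?_, ?_⟩
    · show (1:ℝ) ≤ s⁻¹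
      rw [le_inv_comm₀ one_pos hs]
      simpa using hs1
    · show (s⁻¹) ^ 2 = 1 + ‖-(s⁻¹) • x‖ ^ 2
      rw [norm_smul]
      simp only [Real.norm_eq_abs, abs_neg, abs_inv, abs_of_pos hs, mul_pow]
      field_simp
      nlinarith
    · show s⁻¹ • (t • x) + t • (-(s⁻¹) • x) = 0
      module
  · rintro ⟨h1, h2, h3⟩
    obtain ⟨⟨a, b⟩, c, d⟩ := p
    simp only [Kset, Set.mem_setOf_eq] at h1 h2 h3
    have hc : (0:ℝ) < c := lt_of_lt_of_le one_pos h1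
    refine ⟨(a, -(c⁻¹ • d)), ?_, ?_⟩
    · show ‖-(c⁻¹ • d)‖ < 1
      rw [norm_neg, norm_smul, Real.norm_eq_abs, abs_inv, abs_of_pos hc]
      rw [inv_mul_lt_iff₀ hc, mul_one]
      nlinarith [norm_nonneg d]
    · have hnx : ‖(-(c⁻¹ • d) : EucV n)‖ ^ 2 = ‖d‖ ^ 2 / c ^ 2 := by
        rw [norm_neg, norm_smul, Real.norm_eq_abs, abs_inv, abs_of_pos hc, mul_pow]
        field_simp
      have hsx : Real.sqrt (1 - ‖(-(c⁻¹ • d) : EucV n)‖ ^ 2) = c⁻¹ := by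
        rw [hnx, show 1 - ‖d‖ ^ 2 / c ^ 2 = c⁻¹ ^ 2 by field_simp; nlinarith]
        rw [Real.sqrt_sq (by positivity)]
      show ((a, a • (-(c⁻¹ • d))), _, _) = ((a, b), c, d)
      rw [hsx, inv_inv]
      refine Prod.ext (Prod.ext rfl ?_) (Prod.ext rfl ?_)
      · show a • (-(c⁻¹ • d)) = b
        have : b = c⁻¹ • (c • b) := by rw [smul_smul, inv_mul_cancel₀ (ne_of_gt hc), one_smul]
        rw [this, show c • b = -(a • d) by linear_combination (norm := module) h3]
        module
      · show -c • (-(c⁻¹ • d)) = d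
        rw [smul_neg, smul_smul, neg_mul, neg_smul, neg_neg,
          mul_inv_cancel₀ (ne_of_gt hc), one_smul]

lemma mem_S_of_phi (n : ℕ) (t : ℝ) (x : EucV n) (ht : t ≠ 0) (hx : ‖x‖ < 1) :
    phiMap n (t, x) ∈ {p : (ℝ × EucV n) × (ℝ × EucV n) |
      p.1 ∈ coneC n ∧ ∀ v : ℝ × EucV n, fderiv ℝ (gFun n) p.1 v = innerRn n p.2 v} := by
  obtain ⟨hcone, hgrad⟩ := phi_key n t x ht hx
  refine ⟨hcone, fun v => ?_⟩
  have e1 : (phiMap n (t, x)).1 = (t, t • x) := rfl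
  have e2 : (phiMap n (t, x)).2 = gradVec n (t, t • x) := hgrad.symm
  rw [e1, e2, fderiv_eq_inner_gradVec n _ hcone v]

/-- the range of `φ` is the closure of the graph of the gradient of `g`
over the cone `C`.  (The graph of the gradient is expressed via the Fréchet derivative and
the standard inner product on `ℝ × ℝ^{n-1}`.) -/
theorem stmt16 (n : ℕ) (hn : 2 ≤ n) :
    phiMap n '' diskDom n =
      closure {p : (ℝ × EucV n) × (ℝ × EucV n) |
        p.1 ∈ coneC n ∧ ∀ v : ℝ × EucV n, fderiv ℝ (gFun n) p.1 v = innerRn n p.2 v} := by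
  set S := {p : (ℝ × EucV n) × (ℝ × EucV n) |
      p.1 ∈ coneC n ∧ ∀ v : ℝ × EucV n, fderiv ℝ (gFun n) p.1 v = innerRn n p.2 v} with hS_def
  apply Set.Subset.antisymm
  · rintro p ⟨⟨t, x⟩, hx, rfl⟩
    have hx' : ‖x‖ < 1 := hx
    by_cases ht : t = 0
    · subst ht
      have hmem : ∀ k : ℕ, phiMap n ((1 : ℝ) / (k + 1), x) ∈ S := fun k =>
        mem_S_of_phi n _ x (by positivity) hx'
      have h0 : Filter.Tendsto (fun k : ℕ => (1 : ℝ) / (k + 1)) Filter.atTop (nhds 0) :=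
        tendsto_one_div_add_atTop_nhds_zero_nat
      have h0x : Filter.Tendsto (fun k : ℕ => ((1 : ℝ) / (k + 1)) • x) Filter.atTop
          (nhds ((0 : ℝ) • x)) := h0.smul_const x
      have htend :=
        Filter.Tendsto.prodMk (f := Filter.atTop (α := ℕ)) (h0.prodMk h0x)
          (tendsto_const_nhds (x := (((Real.sqrt (1 - ‖x‖ ^ 2))⁻¹,
            -((Real.sqrt (1 - ‖x‖ ^ 2))⁻¹) • x) : ℝ × EucV n)))
      rw [← nhds_prod_eq, ← nhds_prod_eq] at htend
      exact mem_closure_of_tendsto htend (Filter.Eventually.of_forall hmem)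
    · exact subset_closure (mem_S_of_phi n t x ht hx')
  · rw [image_eq_K]
    apply closure_minimal _ (Kset_closed n)
    intro p hp
    obtain ⟨hcone, hgrad⟩ := hp
    obtain ⟨h1, h2, h3⟩ := cone_norm_lt n p.1 hcone
    obtain ⟨hcone', hkey⟩ := phi_key n p.1.1 (p.1.1⁻¹ • p.1.2) h1 h2
    have hp2 : p.2 = gradVec n p.1 := by
      refine (innerRn_cancel n (gradVec n p.1) p.2 fun v => ?_).symm
      rw [← fderiv_eq_inner_gradVec n p.1 hcone v]
      exact hgrad v
    rw [← image_eq_K]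
    refine ⟨(p.1.1, p.1.1⁻¹ • p.1.2), h2, ?_⟩
    show ((p.1.1, p.1.1 • (p.1.1⁻¹ • p.1.2)), _) = p
    rw [h3] at hkey ⊢
    refine Prod.ext (Prod.ext rfl rfl) ?_
    show ((Real.sqrt (1 - ‖p.1.1⁻¹ • p.1.2‖ ^ 2))⁻¹,
      -((Real.sqrt (1 - ‖p.1.1⁻¹ • p.1.2‖ ^ 2))⁻¹) • (p.1.1⁻¹ • p.1.2)) = p.2
    rw [← hkey, hp2]
  done

end
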